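/- Let x be a unimodular lattice in ℝ² such that the full orbit {g_t x : t ∈ ℝ} is relatively compact in the space of unimodular lattices, let a ≠ 0, and let v = (√a, √a) if a > 0 and v = (√(−a), −√(−a)) if a < 0, so that Q₀(v) = a. If a is in the closure of Q₀(x \ {0}), then some lattice in the closure of the orbit {g_t x : t ∈ ℝ} contains v. -/
import Mathlib


open Matrix

open Topology Filter

noncomputable section

abbrev SL2R := Matrix.SpecialLinearGroup (Fin 2) ℝ

/-- The diagonal flow g_t = diag(e^t, e^{-t}). -/
def gT (t : ℝ) : SL2R :=
  ⟨!![Real.exp t, 0; 0, Real.exp (-t)], by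
    simp [Matrix.det_fin_two_of, ← Real.exp_add]⟩

/-- Γ = SL₂(ℤ) inside SL₂(ℝ). -/
def Gamma : Subgroup SL2R :=
  (Matrix.SpecialLinearGroup.map (n := Fin 2) (Int.castRingHom ℝ)).range

/-- X = SL₂(ℝ)/SL₂(ℤ), the space of unimodular lattices in ℝ², with the
quotient topology. -/
instance : TopologicalSpace SL2R :=
  TopologicalSpace.induced (fun g : SL2R => (g : Matrix (Fin 2) (Fin 2) ℝ)) inferInstance

abbrev XSp := SL2R ⧸ Gamma

/-- `v` belongs to the lattice represented by `x ∈ X`, i.e. for some representative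
`g` of `x`, `v` is an integer combination of the columns of `g`. -/
def latMem (v : Fin 2 → ℝ) (x : XSp) : Prop :=
  ∃ g : SL2R, (QuotientGroup.mk g : XSp) = x ∧
    ∃ p : Fin 2 → ℤ, v = (g : Matrix (Fin 2) (Fin 2) ℝ).mulVec fun i => (p i : ℝ)

/-! ### Auxiliary lemmas -/

lemma sl2r_inducing : Topology.IsInducing (fun g : SL2R => (g : Matrix (Fin 2) (Fin 2) ℝ)) :=
  ⟨rfl⟩

lemma sl2r_continuous_coe : Continuous (fun g : SL2R => (g : Matrix (Fin 2) (Fin 2) ℝ)) :=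
  sl2r_inducing.continuous

instance : ContinuousMul SL2R := by
  constructor
  rw [sl2r_inducing.continuous_iff]
  have : ((fun g : SL2R => (g : Matrix (Fin 2) (Fin 2) ℝ)) ∘
      fun p : SL2R × SL2R => p.1 * p.2) =
      fun p : SL2R × SL2R => (p.1 : Matrix (Fin 2) (Fin 2) ℝ) * (p.2 : Matrix (Fin 2) (Fin 2) ℝ) := by
    funext p; simp
  rw [this]
  exact (sl2r_continuous_coe.comp continuous_fst).matrix_mul
    (sl2r_continuous_coe.comp continuous_snd)

lemma sl2r_continuous_inv :
    Continuous (fun g : SL2R => ((g⁻¹ : SL2R) : Matrix (Fin 2) (Fin 2) ℝ)) := by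
  have : (fun g : SL2R => ((g⁻¹ : SL2R) : Matrix (Fin 2) (Fin 2) ℝ)) =
      fun g : SL2R => ((g : Matrix (Fin 2) (Fin 2) ℝ)).adjugate := by
    funext g; exact Matrix.SpecialLinearGroup.coe_inv g
  rw [this]
  exact sl2r_continuous_coe.matrix_adjugate

/-- Membership of `u` in the lattice of `⟦g⟧` in terms of `g` itself. -/
lemma latMem_mk_iff (u : Fin 2 → ℝ) (g : SL2R) :
    latMem u (QuotientGroup.mk g) ↔
      ∃ p : Fin 2 → ℤ, u = (g : Matrix (Fin 2) (Fin 2) ℝ).mulVec fun i => (p i : ℝ) := by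
  constructor
  · rintro ⟨g', hg', p, rfl⟩
    have hmem : g'⁻¹ * g ∈ Gamma := (QuotientGroup.eq : _).1 hg'
    have hmem' : g⁻¹ * g' ∈ Gamma := by
      have := (Gamma : Subgroup SL2R).inv_mem hmem
      simpa using this
    obtain ⟨B, hB⟩ := hmem'
    have hg'eq : g' = g * (g⁻¹ * g') := by group
    refine ⟨B.1.mulVec p, ?_⟩
    have hcoe : ((g⁻¹ * g' : SL2R) : Matrix (Fin 2) (Fin 2) ℝ) =
        (B.1).map (Int.cast : ℤ → ℝ) := by
      rw [← hB]; rfl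
    have hBv : ((B.1).map (Int.cast : ℤ → ℝ)).mulVec (fun i => (p i : ℝ)) =
        fun i => ((B.1.mulVec p) i : ℝ) := by
      funext i
      have := RingHom.map_mulVec (Int.castRingHom ℝ) B.1 p i
      simpa [Function.comp_def] using this.symm
    calc (g' : Matrix (Fin 2) (Fin 2) ℝ).mulVec (fun i => (p i : ℝ))
        = ((g * (g⁻¹ * g') : SL2R) : Matrix (Fin 2) (Fin 2) ℝ).mulVec (fun i => (p i : ℝ)) := by
          rw [← hg'eq]
      _ = ((g : Matrix (Fin 2) (Fin 2) ℝ) *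
            ((g⁻¹ * g' : SL2R) : Matrix (Fin 2) (Fin 2) ℝ)).mulVec (fun i => (p i : ℝ)) := by
          rw [Matrix.SpecialLinearGroup.coe_mul]
      _ = (g : Matrix (Fin 2) (Fin 2) ℝ).mulVec fun i => ((B.1.mulVec p) i : ℝ) := by
          rw [← Matrix.mulVec_mulVec, hcoe, hBv]
  · rintro ⟨p, hp⟩
    exact ⟨g, rfl, p, hp⟩

/-- The set of pairs (vector, lattice) with the vector in the lattice is closed. -/
lemma isClosed_latMem : IsClosed {q : (Fin 2 → ℝ) × XSp | latMem q.1 q.2} := by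
  set C : Set ((Fin 2 → ℝ) × SL2R) :=
    {q | ∀ i, ((q.2⁻¹ : SL2R) : Matrix (Fin 2) (Fin 2) ℝ).mulVec q.1 i ∈
      Set.range ((↑) : ℤ → ℝ)} with hC
  have hCclosed : IsClosed C := by
    have : C = ⋂ i, (fun q : (Fin 2 → ℝ) × SL2R =>
        ((q.2⁻¹ : SL2R) : Matrix (Fin 2) (Fin 2) ℝ).mulVec q.1 i) ⁻¹'
        (Set.range ((↑) : ℤ → ℝ)) := by
      ext q; simp [hC]
    rw [this]
    refine isClosed_iInter fun i => IsClosed.preimage ?_ Int.isClosedEmbedding_coe_real.isClosed_range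
    have hmv : Continuous (fun q : (Fin 2 → ℝ) × SL2R =>
        ((q.2⁻¹ : SL2R) : Matrix (Fin 2) (Fin 2) ℝ).mulVec q.1) :=
      (sl2r_continuous_inv.comp continuous_snd).matrix_mulVec continuous_fst
    exact (continuous_apply i).comp hmv
  -- C is exactly the preimage of the latMem set
  have hCeq : ∀ (u : Fin 2 → ℝ) (g : SL2R),
      (u, g) ∈ C ↔ latMem u (QuotientGroup.mk g) := by
    intro u g
    rw [latMem_mk_iff]
    have hco1 : ((g⁻¹ : SL2R) : Matrix (Fin 2) (Fin 2) ℝ) * (g : Matrix (Fin 2) (Fin 2) ℝ) =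
        (1 : Matrix (Fin 2) (Fin 2) ℝ) := by
      rw [← Matrix.SpecialLinearGroup.coe_mul, inv_mul_cancel,
        Matrix.SpecialLinearGroup.coe_one]
    have hco2 : (g : Matrix (Fin 2) (Fin 2) ℝ) * ((g⁻¹ : SL2R) : Matrix (Fin 2) (Fin 2) ℝ) =
        (1 : Matrix (Fin 2) (Fin 2) ℝ) := by
      rw [← Matrix.SpecialLinearGroup.coe_mul, mul_inv_cancel,
        Matrix.SpecialLinearGroup.coe_one]
    have hinv' : ∀ z : Fin 2 → ℝ, (g : Matrix (Fin 2) (Fin 2) ℝ).mulVec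
        (((g⁻¹ : SL2R) : Matrix (Fin 2) (Fin 2) ℝ).mulVec z) = z := by
      intro z
      rw [Matrix.mulVec_mulVec, hco2, Matrix.one_mulVec]
    constructor
    · intro h
      choose p hp using h
      refine ⟨p, ?_⟩
      rw [← hinv' u]
      have hfun : ((g⁻¹ : SL2R) : Matrix (Fin 2) (Fin 2) ℝ).mulVec u =
          fun i => (p i : ℝ) := by
        funext i
        exact (hp i).symm
      rw [hfun]
    · rintro ⟨p, rfl⟩
      intro i
      show (((g⁻¹ : SL2R) : Matrix (Fin 2) (Fin 2) ℝ).mulVec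
        ((g : Matrix (Fin 2) (Fin 2) ℝ).mulVec fun i => (p i : ℝ))) i ∈ _
      rw [Matrix.mulVec_mulVec, hco1, Matrix.one_mulVec]
      exact ⟨p i, rfl⟩
  -- closure argument
  rw [← closure_subset_iff_isClosed]
  rintro ⟨u, y⟩ hy
  obtain ⟨g, rfl⟩ := QuotientGroup.mk_surjective y
  set f : (Fin 2 → ℝ) × SL2R → (Fin 2 → ℝ) × XSp :=
    Prod.map id (QuotientGroup.mk : SL2R → XSp) with hf
  have hopen : IsOpenMap f := IsOpenMap.id.prodMap QuotientGroup.isOpenMap_coe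
  have h1 : 𝓝 ((u, (QuotientGroup.mk g : XSp))) ≤ Filter.map f (𝓝 (u, g)) := by
    have := hopen.nhds_le (u, g)
    simpa [hf] using this
  have h2 : ClusterPt (u, (QuotientGroup.mk g : XSp))
      (Filter.principal {q : (Fin 2 → ℝ) × XSp | latMem q.1 q.2}) :=
    mem_closure_iff_clusterPt.1 hy
  have h3 : (Filter.map f (𝓝 (u, g)) ⊓
      Filter.principal {q : (Fin 2 → ℝ) × XSp | latMem q.1 q.2}).NeBot :=
    Filter.NeBot.mono h2 (inf_le_inf_right _ h1)
  have h4 : (𝓝 (u, g) ⊓ Filter.principal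
      (f ⁻¹' {q : (Fin 2 → ℝ) × XSp | latMem q.1 q.2})).NeBot := by
    rw [Filter.inf_principal_neBot_iff] at h3 ⊢
    intro U hU
    have hfU : f '' U ∈ Filter.map f (𝓝 (u, g)) :=
      Filter.mem_map.2 (Filter.mem_of_superset hU (Set.subset_preimage_image f U))
    obtain ⟨b, hbU, hbM⟩ := h3 (f '' U) hfU
    obtain ⟨a', ha'U, rfl⟩ := hbU
    exact ⟨a', ha'U, hbM⟩
  have h5 : (u, g) ∈ closure (f ⁻¹' {q : (Fin 2 → ℝ) × XSp | latMem q.1 q.2}) :=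
    mem_closure_iff_clusterPt.2 h4
  have h6 : f ⁻¹' {q : (Fin 2 → ℝ) × XSp | latMem q.1 q.2} ⊆ C := by
    rintro ⟨u', g'⟩ h
    exact (hCeq u' g').2 h
  have h7 : (u, g) ∈ C :=
    hCclosed.closure_subset ((closure_mono h6) h5)
  exact (hCeq u g).1 h7

lemma latMem_neg {w : Fin 2 → ℝ} {x : XSp} (h : latMem w x) : latMem (-w) x := by
  obtain ⟨g, hg, p, rfl⟩ := h
  refine ⟨g, hg, -p, ?_⟩
  have : (fun i => ((-p) i : ℝ)) = -(fun i => (p i : ℝ)) := by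
    funext i; simp
  rw [this, Matrix.mulVec_neg]

lemma latMem_smul {w : Fin 2 → ℝ} {x : XSp} (g : SL2R) (h : latMem w x) :
    latMem ((g : Matrix (Fin 2) (Fin 2) ℝ).mulVec w) (g • x) := by
  obtain ⟨h₀, rfl, p, rfl⟩ := h
  refine ⟨g * h₀, rfl, p, ?_⟩
  rw [Matrix.mulVec_mulVec, ← Matrix.SpecialLinearGroup.coe_mul]

/-- Applying the appropriate `gT` to a vector with `w 0 * w 1 ≠ 0` normalizes it. -/
lemma gT_mulVec_eq (w : Fin 2 → ℝ) (hq : w 0 * w 1 ≠ 0) :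
    ((gT (Real.log (Real.sqrt |w 0 * w 1| / |w 0|)) : SL2R) :
        Matrix (Fin 2) (Fin 2) ℝ).mulVec w
      = ![(if 0 < w 0 then 1 else -1) * Real.sqrt |w 0 * w 1|,
          (if 0 < w 1 then 1 else -1) * Real.sqrt |w 0 * w 1|] := by
  have h0 : w 0 ≠ 0 := fun h => hq (by rw [h]; ring)
  have h1 : w 1 ≠ 0 := fun h => hq (by rw [h]; ring)
  have hqpos : 0 < |w 0 * w 1| := abs_pos.2 hq
  have hs : 0 < Real.sqrt |w 0 * w 1| := Real.sqrt_pos.2 hqpos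
  have habs0 : |w 0| ≠ 0 := abs_ne_zero.2 h0
  have hr : 0 < Real.sqrt |w 0 * w 1| / |w 0| := div_pos hs (abs_pos.2 h0)
  set L := Real.log (Real.sqrt |w 0 * w 1| / |w 0|) with hL
  have hexp : Real.exp L = Real.sqrt |w 0 * w 1| / |w 0| := Real.exp_log hr
  have hexp' : Real.exp (-L) = (Real.sqrt |w 0 * w 1| / |w 0|)⁻¹ := by
    rw [Real.exp_neg, hexp]
  have hss : Real.sqrt |w 0 * w 1| * Real.sqrt |w 0 * w 1| = |w 0 * w 1| :=
    Real.mul_self_sqrt hqpos.le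
  have hmv : ((gT L : SL2R) : Matrix (Fin 2) (Fin 2) ℝ).mulVec w
      = ![Real.exp L * w 0, Real.exp (-L) * w 1] := by
    funext i
    fin_cases i <;>
      simp [gT, Matrix.mulVec, dotProduct, Fin.sum_univ_two]
  rw [hmv, hexp, hexp']
  have hc0 : Real.sqrt |w 0 * w 1| / |w 0| * w 0
      = (if 0 < w 0 then 1 else -1) * Real.sqrt |w 0 * w 1| := by
    rw [div_mul_eq_mul_div, div_eq_iff habs0]
    rcases lt_or_gt_of_ne h0 with hneg | hpos
    · rw [if_neg (not_lt.2 hneg.le), abs_of_neg hneg]; ring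
    · rw [if_pos hpos, abs_of_pos hpos]; ring
  have hc1 : (Real.sqrt |w 0 * w 1| / |w 0|)⁻¹ * w 1
      = (if 0 < w 1 then 1 else -1) * Real.sqrt |w 0 * w 1| := by
    have hkey : |w 0| * w 1 = (if 0 < w 1 then 1 else -1) * |w 0 * w 1| := by
      rw [abs_mul]
      rcases lt_or_gt_of_ne h1 with hneg | hpos
      · rw [if_neg (not_lt.2 hneg.le), abs_of_neg hneg]; ring
      · rw [if_pos hpos, abs_of_pos hpos]; ring
    rw [inv_div, div_mul_eq_mul_div, div_eq_iff hs.ne', hkey]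
    rw [mul_assoc, hss]
  rw [hc0, hc1]

/-- if the full g_t-orbit of the unimodular lattice x is relatively
compact and a ≠ 0 lies in the closure of Q₀(x \ {0}), then some lattice in the
closure of the orbit contains the vector v (v = (√a,√a) if a > 0, and
v = (−√(−a), √(−a)) if a < 0, so that Q₀(v) = a). -/
theorem stmt3 (x : XSp)
    (horb : IsCompact (closure {y : XSp | ∃ t : ℝ, y = gT t • x}))
    (a : ℝ) (ha : a ≠ 0) (v : Fin 2 → ℝ)
    (hvpos : 0 < a → v = ![Real.sqrt a, Real.sqrt a])
    (hvneg : a < 0 → v = ![-Real.sqrt (-a), Real.sqrt (-a)])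
    (hacl : a ∈ closure ((fun w : Fin 2 → ℝ => w 0 * w 1) '' {w | latMem w x ∧ w ≠ 0})) :
    ∃ x₀ ∈ closure {y : XSp | ∃ t : ℝ, y = gT t • x}, latMem v x₀ := by
  classical
  obtain ⟨q, hqmem, hqa⟩ := mem_closure_iff_seq_limit.1 hacl
  have hqmem' : ∀ n, ∃ w : Fin 2 → ℝ, latMem w x ∧ w 0 * w 1 = q n := by
    intro n
    rcases hqmem n with ⟨w, ⟨h1, _⟩, h3⟩
    exact ⟨w, h1, h3⟩
  choose w hwmem hwq using hqmem'
  -- normalized lattice vectors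
  set w' : ℕ → Fin 2 → ℝ := fun n => if 0 < a * w n 0 then w n else -(w n) with hw'
  have hw'mem : ∀ n, latMem (w' n) x := by
    intro n
    by_cases h : 0 < a * w n 0
    · simpa [hw', h] using hwmem n
    · simpa [hw', h] using latMem_neg (hwmem n)
  have hw'q : ∀ n, w' n 0 * w' n 1 = q n := by
    intro n
    by_cases h : 0 < a * w n 0
    · simp [hw', h, hwq n]
    · simp only [hw', if_neg h, Pi.neg_apply]
      rw [← hwq n]; ring
  -- the flow times and resulting points
  set t : ℕ → ℝ := fun n => Real.log (Real.sqrt |q n| / |w' n 0|) with ht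
  set u : ℕ → Fin 2 → ℝ := fun n =>
    ((gT (t n) : SL2R) : Matrix (Fin 2) (Fin 2) ℝ).mulVec (w' n) with hu
  set y : ℕ → XSp := fun n => gT (t n) • x with hy
  have hlat : ∀ n, latMem (u n) (y n) := fun n => latMem_smul _ (hw'mem n)
  have hyK : ∀ n, y n ∈ closure {z : XSp | ∃ s : ℝ, z = gT s • x} :=
    fun n => subset_closure ⟨t n, rfl⟩
  -- sign
  set σ : ℝ := if 0 < a then 1 else -1 with hσ
  have hveq : v = ![σ * Real.sqrt |a|, Real.sqrt |a|] := by
    rcases lt_or_gt_of_ne ha with hneg | hpos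
    · rw [hvneg hneg, hσ, if_neg (not_lt.2 hneg.le), abs_of_neg hneg]
      funext i; fin_cases i <;> simp
    · rw [hvpos hpos, hσ, if_pos hpos, abs_of_pos hpos]
      funext i; fin_cases i <;> simp
  -- eventual description of u n
  have hev : ∀ᶠ n in Filter.atTop, u n = ![σ * Real.sqrt |q n|, Real.sqrt |q n|] := by
    have hball : ∀ᶠ n in Filter.atTop, |q n - a| < |a| := by
      have := hqa.eventually (Metric.ball_mem_nhds a (abs_pos.2 ha))
      simpa [Real.dist_eq] using this
    filter_upwards [hball] with n hn
    have hqn0 : 0 < a * q n := by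
      rcases lt_or_gt_of_ne ha with hneg | hpos
      · have : q n < 0 := by
          rw [abs_of_neg hneg] at hn
          cases abs_lt.1 hn; linarith
        nlinarith
      · have : 0 < q n := by
          rw [abs_of_pos hpos] at hn
          cases abs_lt.1 hn; linarith
        nlinarith
    have hqne : q n ≠ 0 := by
      intro h; rw [h] at hqn0; simp at hqn0
    have hqw : w' n 0 * w' n 1 ≠ 0 := by rw [hw'q n]; exact hqne
    have hw0ne : w' n 0 ≠ 0 := fun h => hqw (by rw [h]; ring)
    have hw1ne : w' n 1 ≠ 0 := fun h => hqw (by rw [h]; ring)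
    -- sign of w' n 0 matches sign of a
    have hsign0 : 0 < a * w' n 0 := by
      have hwn0ne : w n 0 ≠ 0 := by
        intro h
        apply hw0ne
        by_cases hc : 0 < a * w n 0
        · simp [hw', hc, h]
        · simp [hw', hc, h]
      by_cases hc : 0 < a * w n 0
      · simp only [hw', if_pos hc]
        exact hc
      · have : a * w n 0 < 0 := lt_of_le_of_ne (not_lt.1 hc) (by
          intro h
          rcases mul_eq_zero.1 h with h' | h'
          · exact ha h'
          · exact hwn0ne h')
        simp only [hw', if_neg hc]
        simp only [Pi.neg_apply]
        nlinarith
    -- sign of w' n 1 is positive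
    have hsign1 : 0 < w' n 1 := by
      have h01 : 0 < a * (w' n 0 * w' n 1) := by rw [hw'q n]; exact hqn0
      nlinarith
    have hmain := gT_mulVec_eq (w' n) hqw
    have habsq : |w' n 0 * w' n 1| = |q n| := by rw [hw'q n]
    rw [habsq] at hmain
    have hun : u n = ![(if 0 < w' n 0 then 1 else -1) * Real.sqrt |q n|,
        (if 0 < w' n 1 then 1 else -1) * Real.sqrt |q n|] := by
      rw [hu]
      simp only
      rw [ht]
      simpa [habsq] using hmain
    have hs0 : (if 0 < w' n 0 then (1:ℝ) else -1) = σ := by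
      rcases lt_or_gt_of_ne ha with hneg | hpos
      · have hw0neg : w' n 0 < 0 := by nlinarith
        rw [if_neg (not_lt.2 hw0neg.le), hσ, if_neg (not_lt.2 hneg.le)]
      · have hw0pos : 0 < w' n 0 := by nlinarith
        rw [if_pos hw0pos, hσ, if_pos hpos]
    rw [hun, hs0, if_pos hsign1, one_mul]
  -- limit of u n is v
  have hsqrt : Filter.Tendsto (fun n => Real.sqrt |q n|) Filter.atTop (𝓝 (Real.sqrt |a|)) :=
    ((Real.continuous_sqrt.comp continuous_abs).tendsto a).comp hqa
  have hulim : Filter.Tendsto u Filter.atTop (𝓝 v) := by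
    have hlim : Filter.Tendsto (fun n => (![σ * Real.sqrt |q n|, Real.sqrt |q n|] : Fin 2 → ℝ))
        Filter.atTop (𝓝 v) := by
      rw [hveq]
      rw [tendsto_pi_nhds]
      intro i
      fin_cases i
      · simpa using (tendsto_const_nhds.mul hsqrt)
      · simpa using hsqrt
    exact hlim.congr' (hev.mono fun n h => h.symm)
  -- compactness
  set K := closure {z : XSp | ∃ s : ℝ, z = gT s • x} with hKdef
  have hCcomp : IsCompact ((Metric.closedBall v 1 : Set (Fin 2 → ℝ)) ×ˢ K) :=
    (isCompact_closedBall v 1).prod horb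
  set F : Filter ((Fin 2 → ℝ) × XSp) := Filter.map (fun n => (u n, y n)) Filter.atTop with hF
  have hFle : F ≤ Filter.principal ((Metric.closedBall v 1 : Set (Fin 2 → ℝ)) ×ˢ K) := by
    rw [Filter.le_principal_iff, hF, Filter.mem_map]
    have hball : ∀ᶠ n in Filter.atTop, u n ∈ Metric.closedBall v 1 :=
      hulim.eventually (Metric.closedBall_mem_nhds v one_pos)
    filter_upwards [hball] with n hn
    exact ⟨hn, hyK n⟩
  obtain ⟨⟨u₀, x₀⟩, hmem, hcl⟩ := hCcomp.exists_clusterPt hFle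
  -- u₀ = v
  have hu₀ : u₀ = v := by
    have h1 : (𝓝 (u₀, x₀) ⊓ F).NeBot := hcl
    have h2 : (Filter.map Prod.fst (𝓝 (u₀, x₀) ⊓ F)).NeBot := h1.map _
    have h3 : Filter.map Prod.fst (𝓝 (u₀, x₀) ⊓ F) ≤ 𝓝 u₀ ⊓ 𝓝 v := by
      refine le_inf ?_ ?_
      · exact le_trans (Filter.map_mono inf_le_left)
          (continuous_fst.tendsto (u₀, x₀))
      · refine le_trans (Filter.map_mono inf_le_right) ?_
        rw [hF, Filter.map_map]
        exact hulim
    exact eq_of_nhds_neBot (Filter.NeBot.mono h2 h3)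
  -- latMem v x₀ via closedness
  have hFM : F ≤ Filter.principal {p : (Fin 2 → ℝ) × XSp | latMem p.1 p.2} := by
    rw [Filter.le_principal_iff, hF, Filter.mem_map]
    filter_upwards with n
    exact hlat n
  have hclM : ClusterPt (u₀, x₀) (Filter.principal {p : (Fin 2 → ℝ) × XSp | latMem p.1 p.2}) :=
    Filter.NeBot.mono hcl (inf_le_inf_left _ hFM)
  have hmemM : (u₀, x₀) ∈ {p : (Fin 2 → ℝ) × XSp | latMem p.1 p.2} :=
    isClosed_latMem.closure_subset (mem_closure_iff_clusterPt.2 hclM)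
  refine ⟨x₀, hmem.2, ?_⟩
  rw [← hu₀]
  exact hmemM

end
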